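/- Along the steady shock polar, the sonic-point parametrization w^s = (2h)^{1/2}((τ²-1)τ^(γ-1) - 2h)^{1/2} / ((τ+1)τ^(γ-1) + 2h) and M_∞² = 1 + (γ+1)h(τ) (with h evaluated at τ > 1) defines w^s and M_∞² as strictly increasing functions of τ on (1, ∞). -/

import Mathlib

open Set

/-- Polytropic enthalpy: `h(τ) = (τ^(γ-1) - 1)/(γ-1)` for `γ > 1`, `log τ` for `γ = 1`. -/
noncomputable def enthalpy (γ τ : ℝ) : ℝ :=
  if γ = 1 then Real.log τ else (τ ^ (γ - 1) - 1) / (γ - 1)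

/-- Sonic-point parametrization of the deflection tangent:
`w^s(τ) = (2h)^{1/2}((τ²-1)τ^(γ-1) - 2h)^{1/2}/((τ+1)τ^(γ-1) + 2h)`,
with `h` evaluated at `τ`. -/
noncomputable def wS (γ τ : ℝ) : ℝ :=
  Real.sqrt (2 * enthalpy γ τ) *
      Real.sqrt ((τ ^ 2 - 1) * τ ^ (γ - 1) - 2 * enthalpy γ τ) /
    ((τ + 1) * τ ^ (γ - 1) + 2 * enthalpy γ τ)

/-! With `p = τ^(γ-1) = 1 + (γ-1)h` and `h' = τ^(γ-2) = p/τ > 0`, `M_∞²` is increasing since `h` is.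
For `w^s` write `(w^s)² = 2hF/D²` with `F = (τ²-1)p - 2h` and `D = (τ+1)p + 2h`. Eliminating `p`,
the derivative of `(w^s)²` is `2(τ+1)h'(2(γ+1)τh² + F)/D³`, and `F > 0` because `F(1) = 0` and
`F' = (γ+1)(τ²-1)h' > 0`. -/

lemma strictMonoOn_of_hasDerivAt_pos {D : Set ℝ} (hD : Convex ℝ D) {f f' : ℝ → ℝ}
    (hf : ∀ x ∈ D, HasDerivAt f (f' x) x) (hf'₀ : ∀ x ∈ interior D, 0 < f' x) :
    StrictMonoOn f D :=
  strictMonoOn_of_hasDerivWithinAt_pos hD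
    (fun x hx ↦ (hf x hx).continuousAt.continuousWithinAt)
    (fun x hx ↦ (hf x (interior_subset hx)).hasDerivWithinAt) hf'₀

section Rpow

variable (γ : ℝ) {τ : ℝ}

lemma hasDerivAt_rpow_sub_one (hτ : 0 < τ) :
    HasDerivAt (fun x : ℝ ↦ x ^ (γ - 1)) ((γ - 1) * τ ^ (γ - 2)) τ := by
  convert Real.hasDerivAt_rpow_const (p := γ - 1) (Or.inl hτ.ne') using 3
  ring

lemma rpow_sub_one_eq_mul (hτ : 0 < τ) : τ ^ (γ - 1) = τ ^ (γ - 2) * τ := by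
  rw [← Real.rpow_add_one hτ.ne']
  ring_nf

end Rpow

section Enthalpy

variable (γ : ℝ) {τ : ℝ}

lemma enthalpy_one : enthalpy γ 1 = 0 := by
  unfold enthalpy; split_ifs <;> simp

lemma one_add_mul_enthalpy (τ : ℝ) : 1 + (γ - 1) * enthalpy γ τ = τ ^ (γ - 1) := by
  unfold enthalpy
  split_ifs with hγ
  · simp [hγ]
  · field_simp [sub_ne_zero.mpr hγ]
    ring

lemma hasDerivAt_enthalpy (hτ : 0 < τ) : HasDerivAt (enthalpy γ) (τ ^ (γ - 2)) τ := by
  by_cases hγ : γ = 1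
  · subst hγ
    have hlog : enthalpy 1 = Real.log := funext fun x ↦ if_pos rfl
    rw [hlog, show (1 : ℝ) - 2 = -1 by norm_num, Real.rpow_neg_one]
    exact Real.hasDerivAt_log hτ.ne'
  · have hpow : enthalpy γ = fun x ↦ (x ^ (γ - 1) - 1) / (γ - 1) := funext fun x ↦ if_neg hγ
    rw [hpow]
    exact (((hasDerivAt_rpow_sub_one γ hτ).sub_const 1).div_const (γ - 1)).congr_deriv
      (mul_div_cancel_left₀ _ (sub_ne_zero.mpr hγ))

lemma strictMonoOn_enthalpy : StrictMonoOn (enthalpy γ) (Ioi 0) :=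
  strictMonoOn_of_hasDerivAt_pos (convex_Ioi 0) (fun _ hx ↦ hasDerivAt_enthalpy γ hx)
    (fun _ hx ↦ Real.rpow_pos_of_pos (interior_subset (s := Ioi (0 : ℝ)) hx) _)

lemma enthalpy_pos (hτ : 1 < τ) : 0 < enthalpy γ τ :=
  enthalpy_one γ ▸ strictMonoOn_enthalpy γ (mem_Ioi.2 one_pos) (mem_Ioi.2 (one_pos.trans hτ)) hτ

end Enthalpy

noncomputable def wSRadicand (γ τ : ℝ) : ℝ := (τ ^ 2 - 1) * τ ^ (γ - 1) - 2 * enthalpy γ τ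

noncomputable def wSDenom (γ τ : ℝ) : ℝ := (τ + 1) * τ ^ (γ - 1) + 2 * enthalpy γ τ

noncomputable def wSSq (γ τ : ℝ) : ℝ := 2 * enthalpy γ τ * wSRadicand γ τ / wSDenom γ τ ^ 2

lemma wSRadicand_eq_enthalpy (γ τ : ℝ) :
    wSRadicand γ τ = (τ ^ 2 - 1) * (1 + (γ - 1) * enthalpy γ τ) - 2 * enthalpy γ τ := by
  rw [wSRadicand, one_add_mul_enthalpy]

lemma wSDenom_eq_enthalpy (γ τ : ℝ) :
    wSDenom γ τ = (τ + 1) * (1 + (γ - 1) * enthalpy γ τ) + 2 * enthalpy γ τ := by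
  rw [wSDenom, one_add_mul_enthalpy]

section SonicPoint

variable {γ τ : ℝ}

lemma hasDerivAt_wSRadicand (hτ : 0 < τ) :
    HasDerivAt (wSRadicand γ) ((γ + 1) * (τ ^ 2 - 1) * τ ^ (γ - 2)) τ := by
  refine ((((hasDerivAt_pow 2 τ).sub_const 1).mul (hasDerivAt_rpow_sub_one γ hτ)).sub
    ((hasDerivAt_enthalpy γ hτ).const_mul 2)).congr_deriv ?_
  rw [rpow_sub_one_eq_mul γ hτ]
  ring

lemma hasDerivAt_wSDenom (hτ : 0 < τ) :
    HasDerivAt (wSDenom γ) ((γ * τ + γ + 1) * τ ^ (γ - 2)) τ := by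
  refine ((((hasDerivAt_id' τ).add_const 1).mul (hasDerivAt_rpow_sub_one γ hτ)).add
    ((hasDerivAt_enthalpy γ hτ).const_mul 2)).congr_deriv ?_
  rw [rpow_sub_one_eq_mul γ hτ]
  ring

lemma wSRadicand_pos (hγ : -1 < γ) (hτ : 1 < τ) : 0 < wSRadicand γ τ := by
  have hmono : StrictMonoOn (wSRadicand γ) (Ici 1) := by
    refine strictMonoOn_of_hasDerivAt_pos (convex_Ici 1)
      (fun x hx ↦ hasDerivAt_wSRadicand (zero_lt_one.trans_le hx)) fun x hx ↦ ?_
    rw [interior_Ici] at hx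
    have hx1 : 1 < x := hx
    have : 0 < x ^ 2 - 1 := by nlinarith
    have := Real.rpow_pos_of_pos (zero_lt_one.trans hx1) (γ - 2)
    have : 0 < γ + 1 := by linarith
    positivity
  have h1 : wSRadicand γ 1 = 0 := by simp [wSRadicand, enthalpy_one]
  simpa [h1] using hmono self_mem_Ici hτ.le hτ

lemma wSDenom_pos (hτ : 1 < τ) : 0 < wSDenom γ τ := by
  have := Real.rpow_pos_of_pos (zero_lt_one.trans hτ) (γ - 1)
  have := enthalpy_pos γ hτ
  unfold wSDenom
  positivity

lemma hasDerivAt_wSSq (hτ : 0 < τ) (hD : wSDenom γ τ ≠ 0) :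
    HasDerivAt (wSSq γ)
      (2 * (τ + 1) * τ ^ (γ - 2) *
        (2 * (γ + 1) * τ * enthalpy γ τ ^ 2 + wSRadicand γ τ) / wSDenom γ τ ^ 3) τ := by
  refine ((((hasDerivAt_enthalpy γ hτ).const_mul 2).mul (hasDerivAt_wSRadicand hτ)).div
    ((hasDerivAt_wSDenom hτ).pow 2) (pow_ne_zero 2 hD)).congr_deriv ?_
  simp only [Pi.pow_apply, Pi.mul_apply]
  field_simp
  rw [wSRadicand_eq_enthalpy, wSDenom_eq_enthalpy]
  ring

lemma strictMonoOn_wSSq (hγ : -1 < γ) : StrictMonoOn (wSSq γ) (Ioi 1) := by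
  refine strictMonoOn_of_hasDerivAt_pos (convex_Ioi 1)
    (fun x hx ↦ hasDerivAt_wSSq (zero_lt_one.trans hx) (wSDenom_pos hx).ne') fun x hx ↦ ?_
  rw [interior_Ioi] at hx
  have hx1 : 1 < x := hx
  have := Real.rpow_pos_of_pos (zero_lt_one.trans hx1) (γ - 2)
  have := wSRadicand_pos hγ hx1
  have := wSDenom_pos (γ := γ) hx1
  have : 0 < γ + 1 := by linarith
  have : 0 < x := by linarith
  positivity

lemma wS_eq_sqrt_wSSq (hh : 0 ≤ enthalpy γ τ) (hD : 0 ≤ wSDenom γ τ) :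
    wS γ τ = √(wSSq γ τ) := by
  rw [wSSq, Real.sqrt_div' _ (sq_nonneg _), Real.sqrt_sq hD, Real.sqrt_mul (by positivity)]
  rfl

lemma strictMonoOn_wS (hγ : -1 < γ) : StrictMonoOn (wS γ) (Ioi 1) := by
  intro a ha b hb hab
  have hwS {x : ℝ} (hx : 1 < x) : wS γ x = √(wSSq γ x) :=
    wS_eq_sqrt_wSSq (enthalpy_pos γ hx).le (wSDenom_pos hx).le
  rw [hwS ha, hwS hb]
  refine Real.sqrt_lt_sqrt ?_ (strictMonoOn_wSSq hγ ha hb hab)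
  have := enthalpy_pos γ ha
  have := wSRadicand_pos hγ ha
  unfold wSSq
  positivity

end SonicPoint

/-- Along the steady shock polar sonic-point parametrization, both `w^s` and
`M_∞² = 1 + (γ+1)h(τ)` are strictly increasing functions of `τ` on `(1, ∞)`. -/
theorem sonic_parametrization_strictMono (γ : ℝ) (hγ : 1 ≤ γ) :
    StrictMonoOn (wS γ) (Set.Ioi 1) ∧
    StrictMonoOn (fun τ => 1 + (γ + 1) * enthalpy γ τ) (Set.Ioi 1) := by
  have hmono : StrictMonoOn (enthalpy γ) (Ioi 1) :=
    (strictMonoOn_enthalpy γ).mono (Ioi_subset_Ioi zero_le_one)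
  refine ⟨strictMonoOn_wS (by linarith), fun a ha b hb hab ↦ ?_⟩
  have := hmono ha hb hab
  dsimp only
  gcongr
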